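/- Let n ≥ 2, D ≥ 1, p ∈ [0,1], q = 1 − p, and let a ≥ 1 be an integer. Then the number of α ∈ ℕ^n with α_1+⋯+α_n = D + a and α_i ≥ a for all i equals m_n(D+a−na), and the expected value of W_a (the number of such α at which the witness event w_α occurs for the random set G of the graded model M(n,D,p)) equals m_n(D+a−na) · (1 − q^{m_{n−1}(a−n+1)})^n · q^{m_n(a−n)}. -/

import Mathlib

open Finset Filter

/-- The set `Ω_D` of exponent vectors of degree `D` in `n` variables. -/
def degSet (n D : ℕ) : Finset (Fin n → ℕ) := Finset.Nat.antidiagonalTuple n D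

/-- Expectation of the random variable `X` under the graded model `M(n,D,p)`. -/
noncomputable def grmEx (n D : ℕ) (p : ℝ) (X : Finset (Fin n → ℕ) → ℝ) : ℝ :=
  ∑ G ∈ (degSet n D).powerset,
    X G * (p ^ G.card * (1 - p) ^ ((degSet n D).card - G.card))

/-- `m_n(d) = C(d+n-1, n-1)` for `d ≥ 0`, and `0` for `d < 0`. -/
def mfun (n : ℕ) (d : ℤ) : ℕ := if 0 ≤ d then (d.toNat + n - 1).choose (n - 1) else 0

/-- The witness event `w_α`. -/
def wEvent {n : ℕ} (α : Fin n → ℕ) (G : Finset (Fin n → ℕ)) : Prop :=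
  (∀ i, ∃ β ∈ G, β i = α i ∧ ∀ j, j ≠ i → β j < α j) ∧
    ¬ ∃ β ∈ G, ∀ j, β j < α j

/-- `W_a G` is the number of `α` with `∑ α = D + a` and `α i ≥ a` for all `i`
at which the witness event `w_α` occurs for `G`. -/
noncomputable def Wa (n D a : ℕ) (G : Finset (Fin n → ℕ)) : ℕ :=
  Set.ncard {α : Fin n → ℕ | (∑ i, α i = D + a) ∧ (∀ i, a ≤ α i) ∧ wEvent α G}

/-!
Translating by a lower bound `b` identifies the exponent vectors `β` of degree `N` with `β ≥ b`
with all vectors of degree `N - ∑ b`, and the reflection `β ↦ c - β` identifies those with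
`β ≤ c` with those of degree `∑ c - N` below `c`, a vacuous constraint once every `c j` is at
least `∑ c - N`. So the admissible `α` number `m_n(D + a - n a)`, the monomials of degree `D`
strictly below `α` number `m_n(a - n)`, and, after deleting the `i`-th coordinate, those on the
`i`-th face of that box (`β i = α i`, strictly below elsewhere) number `m_{n-1}(a - n + 1)`.

The open box and the `n` faces are pairwise disjoint subsets of `Ω_D`, so under the product
measure "`G` meets every face" and "`G` misses the box" are independent events of probabilities
`∏ (1 - q ^ #face)` and `q ^ #box`. Linearity of expectation over the admissible `α` gives `E[W_a]`.
-/

open Finset.Nat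

section StarsAndBars

theorem Finset.Nat.card_antidiagonalTuple (k n : ℕ) :
    #(antidiagonalTuple k n) = (k + n - 1).choose n := by
  classical
  have := card_finsuppAntidiag_nat_eq_choose (s := (univ : Finset (Fin k))) n
  rwa [finsuppAntidiag, card_map, card_attach, card_univ, Fintype.card_fin,
    piAntidiag_univ_fin_eq_antidiagonalTuple] at this

theorem mfun_natCast {m : ℕ} (hm : m ≠ 0) (N : ℕ) : mfun m N = #(antidiagonalTuple m N) := by
  rw [card_antidiagonalTuple, mfun, if_pos (Int.natCast_nonneg N), Int.toNat_natCast,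
    show N + m - 1 = (m - 1) + N by omega, Nat.choose_symm_add]
  congr 1; omega

theorem mfun_of_neg {m : ℕ} {d : ℤ} (hd : d < 0) : mfun m d = 0 := by
  rw [mfun, if_neg (by omega)]

variable {m : ℕ}

theorem card_filter_ge_antidiagonalTuple_add (b : Fin m → ℕ) (N : ℕ) :
    #{β ∈ antidiagonalTuple m (N + ∑ j, b j) | ∀ j, b j ≤ β j} = #(antidiagonalTuple m N) := by
  refine card_nbij' (· - b) (· + b) ?_ ?_ ?_ ?_
  · intro β hβ
    simp only [coe_filter, mem_antidiagonalTuple, mem_coe] at hβ ⊢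
    have : ∑ j, (β j - b j) + ∑ j, b j = N + ∑ j, b j := by
      rw [← sum_add_distrib, ← hβ.1]
      exact sum_congr rfl fun j _ => Nat.sub_add_cancel (hβ.2 j)
    simpa using this
  · intro δ hδ
    simp only [coe_filter, mem_antidiagonalTuple, mem_coe] at hδ ⊢
    simp [sum_add_distrib, hδ]
  · intro β hβ
    simp only [coe_filter] at hβ
    ext j; simp [Nat.sub_add_cancel (hβ.2 j)]
  · intro δ _
    ext j; simp

theorem card_filter_le_antidiagonalTuple_symm (c : Fin m → ℕ) {N s : ℕ}
    (h : N + s = ∑ j, c j) :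
    #{β ∈ antidiagonalTuple m N | ∀ j, β j ≤ c j} =
      #{γ ∈ antidiagonalTuple m s | ∀ j, γ j ≤ c j} := by
  have reflect : ∀ {N s : ℕ}, N + s = ∑ j, c j → ∀ β ∈ antidiagonalTuple m N,
      (∀ j, β j ≤ c j) → c - β ∈ antidiagonalTuple m s ∧ ∀ j, (c - β) j ≤ c j := by
    intro N s h β hβ hβc
    rw [mem_antidiagonalTuple] at hβ ⊢
    refine ⟨?_, fun j => Nat.sub_le _ _⟩
    have : ∑ j, (c j - β j) + ∑ j, β j = s + N := by
      rw [← sum_add_distrib, add_comm s, h]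
      exact sum_congr rfl fun j _ => Nat.sub_add_cancel (hβc j)
    simpa [hβ] using this
  have cancel : ∀ β : Fin m → ℕ, (∀ j, β j ≤ c j) → c - (c - β) = β := fun β hβ => by
    ext j; simp [Nat.sub_sub_self (hβ j)]
  refine card_nbij' (c - ·) (c - ·) ?_ ?_ ?_ ?_
  · intro β hβ
    simp only [coe_filter] at hβ ⊢
    exact reflect h β hβ.1 hβ.2
  · intro γ hγ
    simp only [coe_filter] at hγ ⊢
    exact reflect (by omega) γ hγ.1 hγ.2
  · exact fun β hβ => cancel β (mem_filter.1 hβ).2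
  · exact fun γ hγ => cancel γ (mem_filter.1 hγ).2

theorem card_filter_antidiagonalTuple_removeNth (i : Fin (m + 1)) (c N : ℕ)
    (P : (Fin m → ℕ) → Prop) [DecidablePred P] :
    #{β ∈ antidiagonalTuple (m + 1) (N + c) | β i = c ∧ P (i.removeNth β)} =
      #{δ ∈ antidiagonalTuple m N | P δ} := by
  refine card_nbij' i.removeNth (Fin.insertNth (α := fun _ => ℕ) i c) ?_ ?_ ?_ ?_
  · intro β hβ
    simp only [coe_filter, mem_antidiagonalTuple] at hβ ⊢
    obtain ⟨hsum, hi, hP⟩ := hβ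
    refine ⟨?_, hP⟩
    rw [Fin.sum_univ_succAbove _ i, hi] at hsum
    simp only [Fin.removeNth]
    omega
  · intro δ hδ
    simp only [coe_filter, mem_antidiagonalTuple] at hδ ⊢
    simpa [Fin.sum_univ_succAbove _ i, add_comm] using hδ
  · intro β hβ
    simp only [coe_filter] at hβ
    rw [← hβ.2.1, Fin.insertNth_self_removeNth]
  · intro δ _
    simp

theorem card_filter_ge_antidiagonalTuple (hm : m ≠ 0) (b : Fin m → ℕ) (N : ℕ) :
    #{β ∈ antidiagonalTuple m N | ∀ j, b j ≤ β j} = mfun m (N - ↑(∑ j, b j)) := by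
  by_cases hb : ∑ j, b j ≤ N
  · obtain ⟨M, rfl⟩ := Nat.exists_eq_add_of_le' hb
    rw [card_filter_ge_antidiagonalTuple_add, Nat.cast_add, add_sub_cancel_right, mfun_natCast hm]
  · rw [mfun_of_neg (by omega), card_eq_zero, filter_eq_empty_iff]
    intro β hβ hbβ
    exact hb (mem_antidiagonalTuple.1 hβ ▸ sum_le_sum fun j _ => hbβ j)

theorem card_filter_le_antidiagonalTuple (hm : m ≠ 0) (c : Fin m → ℕ) (N : ℕ)
    (hc : ∀ j, ∑ i, c i ≤ N + c j) :
    #{β ∈ antidiagonalTuple m N | ∀ j, β j ≤ c j} = mfun m (↑(∑ j, c j) - N) := by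
  by_cases hN : N ≤ ∑ j, c j
  · obtain ⟨s, hs⟩ := Nat.exists_eq_add_of_le hN
    rw [card_filter_le_antidiagonalTuple_symm c hs.symm, filter_true_of_mem, hs, Nat.cast_add,
      add_sub_cancel_left, mfun_natCast hm]
    intro γ hγ j
    have := single_le_sum (fun i _ => Nat.zero_le (γ i)) (mem_univ j)
    have := hc j
    rw [mem_antidiagonalTuple.1 hγ] at *
    omega
  · rw [mfun_of_neg (by omega), card_eq_zero, filter_eq_empty_iff]
    intro β hβ hβc
    exact hN (mem_antidiagonalTuple.1 hβ ▸ sum_le_sum fun j _ => hβc j)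

theorem card_filter_lt_antidiagonalTuple (hm : m ≠ 0) {N a : ℕ} (α : Fin m → ℕ)
    (hsum : ∑ j, α j = N + a) (ha : 1 ≤ a) (hα : ∀ j, a ≤ α j) :
    #{β ∈ antidiagonalTuple m N | ∀ j, β j < α j} = mfun m (a - m) := by
  have hlt : ∀ β : Fin m → ℕ, (∀ j, β j < α j) ↔ ∀ j, β j ≤ (α - 1) j := fun β =>
    forall_congr' fun j => by have := hα j; simp only [Pi.sub_apply, Pi.one_apply]; omega
  have hsum' : ∑ j, (α - 1) j + m = N + a := by
    have := sum_congr rfl fun j (_ : j ∈ univ) => Nat.sub_add_cancel (ha.trans (hα j))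
    simpa [sum_add_distrib, hsum] using this
  simp_rw [hlt]
  rw [card_filter_le_antidiagonalTuple hm]
  · congr 1; omega
  · intro j
    have := hα j
    simp only [Pi.sub_apply, Pi.one_apply] at hsum' ⊢
    omega

end StarsAndBars

section BernoulliSubsets

variable {X : Type*} (p : ℝ)

noncomputable def bernoulliExpect (Ω : Finset X) (f : Finset X → ℝ) : ℝ :=
  ∑ G ∈ Ω.powerset, f G * (p ^ #G * (1 - p) ^ (#Ω - #G))

theorem bernoulliExpect_const (Ω : Finset X) (c : ℝ) : bernoulliExpect p Ω (fun _ => c) = c := by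
  rw [bernoulliExpect, ← mul_sum, sum_pow_mul_eq_add_pow, add_sub_cancel, one_pow, mul_one]

theorem bernoulliExpect_congr {Ω : Finset X} {f g : Finset X → ℝ} (h : ∀ G ⊆ Ω, f G = g G) :
    bernoulliExpect p Ω f = bernoulliExpect p Ω g :=
  sum_congr rfl fun G hG => by rw [h G (mem_powerset.1 hG)]

theorem bernoulliExpect_one_sub (Ω : Finset X) (f : Finset X → ℝ) :
    bernoulliExpect p Ω (fun G => 1 - f G) = 1 - bernoulliExpect p Ω f := by
  have total := bernoulliExpect_const p Ω 1
  simp only [bernoulliExpect, one_mul] at total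
  simp only [bernoulliExpect, sub_mul, sum_sub_distrib, one_mul, total]

theorem bernoulliExpect_sum {ι : Type*} (I : Finset ι) (Ω : Finset X) (f : ι → Finset X → ℝ) :
    bernoulliExpect p Ω (fun G => ∑ i ∈ I, f i G) = ∑ i ∈ I, bernoulliExpect p Ω (f i) := by
  simp only [bernoulliExpect, sum_mul]
  exact sum_comm

theorem bernoulliExpect_union_mul [DecidableEq X] {S T : Finset X} (hST : Disjoint S T)
    (f g : Finset X → ℝ) :
    bernoulliExpect p (S ∪ T) (fun G => f (G ∩ S) * g (G ∩ T)) =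
      bernoulliExpect p S f * bernoulliExpect p T g := by
  rw [bernoulliExpect, bernoulliExpect, bernoulliExpect, sum_mul_sum, ← sum_product']
  refine sum_nbij' (fun G => (G ∩ S, G ∩ T)) (fun z => z.1 ∪ z.2) ?_ ?_ ?_ ?_ ?_
  · intro G _
    simp [inter_subset_right]
  · intro z hz
    simp only [mem_product, mem_powerset] at hz ⊢
    exact union_subset_union hz.1 hz.2
  · intro G hG
    simp only [mem_powerset] at hG
    rw [← inter_union_distrib_left, inter_eq_left.2 hG]
  · rintro ⟨H, K⟩ hz
    simp only [mem_product, mem_powerset] at hz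
    simp only [union_inter_distrib_right, inter_eq_left.2 hz.1, inter_eq_left.2 hz.2,
      disjoint_iff_inter_eq_empty.1 (hST.mono_left hz.1),
      disjoint_iff_inter_eq_empty.1 (hST.symm.mono_left hz.2), union_empty, empty_union]
  · intro G hG
    simp only [mem_powerset] at hG
    have hG' : G = G ∩ S ∪ G ∩ T := by rw [← inter_union_distrib_left, inter_eq_left.2 hG]
    have hcard : #G = #(G ∩ S) + #(G ∩ T) := by
      conv_lhs => rw [hG']
      exact card_union_of_disjoint (hST.mono inter_subset_right inter_subset_right)
    have hS : #(G ∩ S) ≤ #S := card_le_card inter_subset_right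
    have hT : #(G ∩ T) ≤ #T := card_le_card inter_subset_right
    rw [hcard, card_union_of_disjoint hST,
      show #S + #T - (#(G ∩ S) + #(G ∩ T)) = (#S - #(G ∩ S)) + (#T - #(G ∩ T)) by omega]
    simp only [pow_add]
    ring

theorem bernoulliExpect_inter_mul [DecidableEq X] {Ω S : Finset X} (hS : S ⊆ Ω)
    (f g : Finset X → ℝ) (hg : ∀ G, g (G \ S) = g G) :
    bernoulliExpect p Ω (fun G => f (G ∩ S) * g G) =
      bernoulliExpect p S f * bernoulliExpect p (Ω \ S) g := by
  rw [← bernoulliExpect_union_mul p disjoint_sdiff, union_sdiff_of_subset hS]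
  refine sum_congr rfl fun G hG => ?_
  dsimp only
  rw [← inter_sdiff_assoc, inter_eq_left.2 (mem_powerset.1 hG), hg]

theorem sdiff_inter_of_disjoint [DecidableEq X] {B S : Finset X} (h : Disjoint B S)
    (G : Finset X) : G \ S ∩ B = G ∩ B := by
  rw [sdiff_inter_right_comm, sdiff_eq_self_of_disjoint (h.mono_left inter_subset_right)]

theorem bernoulliExpect_prod_inter [DecidableEq X] {ι : Type*} [DecidableEq ι] (I : Finset ι)
    (B : ι → Finset X) (f : ι → Finset X → ℝ) {Ω : Finset X} (hB : ∀ i ∈ I, B i ⊆ Ω)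
    (hdisj : (I : Set ι).PairwiseDisjoint B) :
    bernoulliExpect p Ω (fun G => ∏ i ∈ I, f i (G ∩ B i)) =
      ∏ i ∈ I, bernoulliExpect p (B i) (f i) := by
  induction I using Finset.induction_on generalizing Ω with
  | empty => simpa using bernoulliExpect_const p Ω 1
  | insert a s ha ih =>
    have hsa : ∀ i ∈ s, Disjoint (B i) (B a) := fun i hi =>
      hdisj (mem_insert_of_mem hi) (mem_insert_self a s) (ne_of_mem_of_not_mem hi ha)
    simp only [prod_insert ha]
    rw [bernoulliExpect_inter_mul p (hB a (mem_insert_self a s)), ih]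
    · exact fun i hi => subset_sdiff.2 ⟨hB i (mem_insert_of_mem hi), hsa i hi⟩
    · exact hdisj.subset (coe_subset.2 (subset_insert a s))
    · exact fun G => prod_congr rfl fun i hi => by rw [sdiff_inter_of_disjoint (hsa i hi)]

theorem bernoulliExpect_eq_empty [DecidableEq X] (S : Finset X) :
    bernoulliExpect p S (fun H => if H = ∅ then 1 else 0) = (1 - p) ^ #S := by
  simp [bernoulliExpect]

theorem bernoulliExpect_nonempty [DecidableEq X] (S : Finset X) :
    bernoulliExpect p S (fun H => if H.Nonempty then 1 else 0) = 1 - (1 - p) ^ #S := by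
  rw [← bernoulliExpect_eq_empty, ← bernoulliExpect_one_sub]
  congr 1
  ext H
  by_cases hH : H = ∅ <;> simp [hH, nonempty_iff_ne_empty]

theorem bernoulliExpect_forall_nonempty_and_eq_empty [DecidableEq X] {ι : Type*} [Fintype ι]
    [DecidableEq ι] {Ω A : Finset X} (B : ι → Finset X) (hA : A ⊆ Ω) (hB : ∀ i, B i ⊆ Ω)
    (hBA : ∀ i, Disjoint (B i) A) (hBB : Pairwise (Function.onFun Disjoint B)) :
    bernoulliExpect p Ω (fun G => if (∀ i, (G ∩ B i).Nonempty) ∧ G ∩ A = ∅ then 1 else 0) =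
      (∏ i, (1 - (1 - p) ^ #(B i))) * (1 - p) ^ #A := by
  have hind : ∀ G : Finset X,
      (if (∀ i, (G ∩ B i).Nonempty) ∧ G ∩ A = ∅ then (1 : ℝ) else 0) =
        (if G ∩ A = ∅ then 1 else 0) * ∏ i, if (G ∩ B i).Nonempty then 1 else 0 := by
    intro G
    simp only [prod_boole, ite_zero_mul_ite_zero, mem_univ, true_imp_iff, mul_one, and_comm]
  simp_rw [hind]
  rw [bernoulliExpect_inter_mul p hA (fun H => if H = ∅ then 1 else 0),
    bernoulliExpect_prod_inter p univ B fun _ H => if H.Nonempty then 1 else 0,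
    bernoulliExpect_eq_empty, mul_comm]
  · simp_rw [bernoulliExpect_nonempty]
  · exact fun i _ => subset_sdiff.2 ⟨hB i, hBA i⟩
  · exact fun i _ j _ hij => hBB hij
  · exact fun G => prod_congr rfl fun i _ => by rw [sdiff_inter_of_disjoint (hBA i)]

end BernoulliSubsets

section Witness

variable {n : ℕ} (p : ℝ)

theorem grmEx_eq_bernoulliExpect (D : ℕ) (X : Finset (Fin n → ℕ) → ℝ) :
    grmEx n D p X = bernoulliExpect p (degSet n D) X :=
  rfl

def strictlyBelow (D : ℕ) (α : Fin n → ℕ) : Finset (Fin n → ℕ) :=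
  {β ∈ degSet n D | ∀ j, β j < α j}

def face (D : ℕ) (α : Fin n → ℕ) (i : Fin n) : Finset (Fin n → ℕ) :=
  {β ∈ degSet n D | β i = α i ∧ ∀ j, j ≠ i → β j < α j}

theorem card_strictlyBelow (hn : n ≠ 0) {D a : ℕ} (α : Fin n → ℕ) (hsum : ∑ i, α i = D + a)
    (ha : 1 ≤ a) (hα : ∀ i, a ≤ α i) : #(strictlyBelow D α) = mfun n (a - n) :=
  card_filter_lt_antidiagonalTuple hn α hsum ha hα

theorem card_face {k D a : ℕ} (hk : k ≠ 0) (α : Fin (k + 1) → ℕ) (hsum : ∑ i, α i = D + a)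
    (ha : 1 ≤ a) (hα : ∀ i, a ≤ α i) (i : Fin (k + 1)) : #(face D α i) = mfun k (a - k) := by
  have hsplit := Fin.sum_univ_succAbove α i
  have hrest : a ≤ ∑ j, i.removeNth α j :=
    (hα _).trans (single_le_sum (fun j _ => Nat.zero_le (i.removeNth α j)) (mem_univ ⟨0, by omega⟩))
  have hαi : α i ≤ D := by simp only [Fin.removeNth] at hrest; omega
  have hpred : ∀ β : Fin (k + 1) → ℕ, (β i = α i ∧ ∀ j, j ≠ i → β j < α j) ↔
      (β i = α i ∧ ∀ j, i.removeNth β j < i.removeNth α j) := fun β => by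
    simp [Fin.forall_iff_succAbove i, Fin.removeNth, Fin.succAbove_ne]
  rw [face, degSet, filter_congr fun β _ => hpred β, ← Nat.sub_add_cancel hαi,
    card_filter_antidiagonalTuple_removeNth i (α i) (D - α i) fun δ => ∀ j, δ j < i.removeNth α j,
    card_filter_lt_antidiagonalTuple hk (i.removeNth α) _ ha fun j => hα _]
  simp only [Fin.removeNth] at hsplit ⊢
  omega

theorem wEvent_iff {D : ℕ} {α : Fin n → ℕ} {G : Finset (Fin n → ℕ)} (hG : G ⊆ degSet n D) :
    wEvent α G ↔ (∀ i, (G ∩ face D α i).Nonempty) ∧ G ∩ strictlyBelow D α = ∅ := by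
  simp only [wEvent, face, strictlyBelow, inter_filter, inter_eq_left.2 hG, filter_nonempty_iff,
    filter_eq_empty_iff, not_exists, not_and]

open Classical in
theorem bernoulliExpect_wEvent {k D a : ℕ} (hk : k ≠ 0) (α : Fin (k + 1) → ℕ)
    (hsum : ∑ i, α i = D + a) (ha : 1 ≤ a) (hα : ∀ i, a ≤ α i) :
    bernoulliExpect p (degSet (k + 1) D) (fun G => if wEvent α G then 1 else 0) =
      (1 - (1 - p) ^ mfun k (a - k)) ^ (k + 1) * (1 - p) ^ mfun (k + 1) (a - ↑(k + 1)) := by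
  have hdisj : ∀ i, Disjoint (face D α i) (strictlyBelow D α) := fun i =>
    disjoint_filter.2 fun β _ hface hbelow => (hbelow i).ne hface.1
  have hpair : Pairwise (Function.onFun Disjoint (face D α)) := fun i j hij =>
    disjoint_filter.2 fun β _ hi hj => (hj.2 i hij).ne hi.1
  have key := bernoulliExpect_forall_nonempty_and_eq_empty p (A := strictlyBelow D α) (face D α)
    (filter_subset _ _) (fun i => filter_subset _ _) hdisj hpair
  rw [card_strictlyBelow (Nat.succ_ne_zero k) α hsum ha hα] at key
  simp only [card_face hk α hsum ha hα, prod_const, card_univ, Fintype.card_fin] at key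
  rw [← key]
  -- `congr` reconciles the two `Decidable` instances of the `∀ i` condition
  exact bernoulliExpect_congr p fun G hG => by simp only [wEvent_iff hG]; congr

theorem setOf_sum_eq_and_eq_filter (N : ℕ) (P : (Fin n → ℕ) → Prop) [DecidablePred P] :
    {α : Fin n → ℕ | ∑ i, α i = N ∧ P α} = ↑{α ∈ antidiagonalTuple n N | P α} := by
  ext α
  simp [mem_antidiagonalTuple]

open Classical in
theorem Wa_eq_sum (D a : ℕ) (G : Finset (Fin n → ℕ)) :
    (Wa n D a G : ℝ) =
      ∑ α ∈ {α ∈ antidiagonalTuple n (D + a) | ∀ i, a ≤ α i}, if wEvent α G then 1 else 0 := by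
  rw [Wa, setOf_sum_eq_and_eq_filter, Set.ncard_coe_finset, ← filter_filter, natCast_card_filter]

end Witness

theorem count_and_expectation_Wa_general
    (n D : ℕ) (hn : 2 ≤ n) (p q : ℝ)
    (hq : q = 1 - p) (a : ℕ) (ha : 1 ≤ a) :
    Set.ncard {α : Fin n → ℕ | (∑ i, α i = D + a) ∧ ∀ i, a ≤ α i} =
        mfun n ((D : ℤ) + a - n * a) ∧
      grmEx n D p (fun G => (Wa n D a G : ℝ)) =
        (mfun n ((D : ℤ) + a - n * a) : ℝ) *
          (1 - q ^ mfun (n - 1) ((a : ℤ) - n + 1)) ^ n * q ^ mfun n ((a : ℤ) - n) := by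
  classical
  obtain ⟨k, rfl⟩ : ∃ k, n = k + 1 := ⟨n - 1, by omega⟩
  subst hq
  set T := {α ∈ antidiagonalTuple (k + 1) (D + a) | ∀ i, a ≤ α i}
  have hT : #T = mfun (k + 1) (D + a - (k + 1 : ℕ) * a) := by
    rw [card_filter_ge_antidiagonalTuple (Nat.succ_ne_zero k) (fun _ => a)]
    simp
  refine ⟨by rw [setOf_sum_eq_and_eq_filter, Set.ncard_coe_finset, hT], ?_⟩
  calc grmEx (k + 1) D p (fun G => (Wa (k + 1) D a G : ℝ))
      = ∑ α ∈ T, bernoulliExpect p (degSet (k + 1) D) (fun G => if wEvent α G then 1 else 0) := by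
        simp_rw [grmEx_eq_bernoulliExpect, Wa_eq_sum]
        exact bernoulliExpect_sum p T _ _
    _ = ∑ α ∈ T, (1 - (1 - p) ^ mfun k (a - k)) ^ (k + 1) * (1 - p) ^ mfun (k + 1) (a - ↑(k + 1)) :=
        sum_congr rfl fun α hα => by
          rw [mem_filter, mem_antidiagonalTuple] at hα
          exact bernoulliExpect_wEvent p (by omega) α hα.1 ha hα.2
    _ = _ := by
      rw [sum_const, hT, nsmul_eq_mul, Nat.add_sub_cancel, mul_assoc,
        show (a : ℤ) - ↑(k + 1) + 1 = a - k by push_cast; ring]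

theorem count_and_expectation_Wa
    (n D : ℕ) (hn : 2 ≤ n) (hD : 1 ≤ D) (p q : ℝ) (hp : p ∈ Set.Icc (0:ℝ) 1)
    (hq : q = 1 - p) (a : ℕ) (ha : 1 ≤ a) :
    Set.ncard {α : Fin n → ℕ | (∑ i, α i = D + a) ∧ ∀ i, a ≤ α i} =
        mfun n ((D : ℤ) + a - n * a) ∧
      grmEx n D p (fun G => (Wa n D a G : ℝ)) =
        (mfun n ((D : ℤ) + a - n * a) : ℝ) *
          (1 - q ^ mfun (n - 1) ((a : ℤ) - n + 1)) ^ n * q ^ mfun n ((a : ℤ) - n) :=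
  count_and_expectation_Wa_general n D hn p q hq a ha
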